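/- Let G = (V ∪ {r}, E) be a connected graph with nonnegative edge weights ŵ, and let T be the Kruskal auxiliary tree of (G,ŵ) with height function h (leaves are the vertices of G, and each internal vertex u_C created when components merge at weight threshold x gets h_{u_C} = x). Then Σ over edges (u,u') of T with r not in the subtree below u' of (h_u - h_{u'}) equals the minimum spanning tree weight OPT(G, ŵ). -/

import Mathlib

/-- `a` and `b` are connected using the (oriented representatives of) edges in `F`. -/
def EdgeConn {U : Type*} (F : Finset (U × U)) (a b : U) : Prop :=
  Relation.ReflTransGen (fun x y => (x, y) ∈ F ∨ (y, x) ∈ F) a b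

/-- `F` is the edge set of a spanning tree of the subgraph of `(U, Es)` induced
by the vertex set `X`. -/
def IsSpanningTree {U : Type*} (Es : Finset (U × U)) (X : Finset U)
    (F : Finset (U × U)) : Prop :=
  F ⊆ Es ∧ (∀ e ∈ F, e.1 ∈ X ∧ e.2 ∈ X) ∧
    (∀ a ∈ X, ∀ b ∈ X, EdgeConn F a b) ∧ F.card + 1 = X.card

/-- Minimum weight of a spanning tree of the induced subgraph on `X`. -/
noncomputable def OPT {U : Type*} (Es : Finset (U × U)) (X : Finset U)
    (w : U × U → ℝ) : ℝ :=
  sInf {t | ∃ F, IsSpanningTree Es X F ∧ t = ∑ e ∈ F, w e}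
/-- `a` and `b` are connected using edges of weight at most `x`. -/
def ConnBelow {U : Type*} (Es : Finset (U × U)) (wh : U × U → ℝ) (x : ℝ)
    (a b : U) : Prop :=
  Relation.ReflTransGen
    (fun p q => ((p, q) ∈ Es ∧ wh (p, q) ≤ x) ∨ ((q, p) ∈ Es ∧ wh (q, p) ≤ x)) a b

open Classical in
/-- The connected component of `a` in the subgraph of edges of weight at most `x`. -/
noncomputable def compAt {U : Type*} [Fintype U] (Es : Finset (U × U))
    (wh : U × U → ℝ) (x : ℝ) (a : U) : Finset U :=
  Finset.univ.filter (ConnBelow Es wh x a)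

/-- `m` is a descendant of `n` (possibly `m = n`) in the rooted tree with
parent function `par`. -/
def IsDesc {N : Type*} (par : N → N) (m n : N) : Prop := ∃ k, par^[k] m = n

open Classical in
/-- The set of graph vertices whose leaves lie in the subtree below `n`. -/
noncomputable def leavesBelow {U N : Type*} [Fintype U] (par : N → N)
    (lf : U → N) (n : N) : Finset U :=
  Finset.univ.filter (fun v => IsDesc par (lf v) n)

/-!
Let `L = ∑ m, (h (par m) - h m)` be the total edge length of the auxiliary tree. The nodes `m`
with `h m ≤ x < h (par m)` carry disjoint sets of leaves, each of them a component of the graph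
of edges of weight at most `x`. A connected edge set needs at least (number of components - 1)
edges heavier than `x`, so integrating over `x` gives `L ≤ ∑ e ∈ F, wh e + h root` for every
spanning tree `F`. Conversely, gluing connectors of the subtrees of the children of each node
`n` with (number of children - 1) edges of weight at most `h n` builds, bottom-up, a spanning
tree of weight at most `L - h root`. Hence `OPT = L - h root`. Finally the nodes whose subtree
contains `r` are the ancestors of the leaf of `r`, and their edge lengths telescope to `h root`.
-/

open Finset MeasureTheory

section Sums
variable {ι α M : Type*} [DecidableEq α] [AddCommMonoid M] [PartialOrder M]
  [IsOrderedAddMonoid M] {f : α → M}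

theorem sum_union_le_of_nonneg (hf : ∀ x, 0 ≤ f x) (s t : Finset α) :
    ∑ x ∈ s ∪ t, f x ≤ ∑ x ∈ s, f x + ∑ x ∈ t, f x :=
  (le_add_of_nonneg_right (sum_nonneg fun x _ => hf x)).trans_eq sum_union_inter

theorem sum_biUnion_le_of_nonneg (hf : ∀ x, 0 ≤ f x) (s : Finset ι) (t : ι → Finset α) :
    ∑ x ∈ s.biUnion t, f x ≤ ∑ i ∈ s, ∑ x ∈ t i, f x := by
  classical
  induction s using Finset.induction_on with
  | empty => simp
  | insert i s hi ih =>
    rw [biUnion_insert, sum_insert hi]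
    exact (sum_union_le_of_nonneg hf _ _).trans (by gcongr)

end Sums

section Graph
variable {U β : Type*} {F F' E : Finset (U × U)} {a b c : U}

theorem EdgeConn.trans (hab : EdgeConn F a b) (hbc : EdgeConn F b c) : EdgeConn F a c :=
  Relation.ReflTransGen.trans hab hbc

theorem EdgeConn.symm (hab : EdgeConn F a b) : EdgeConn F b a := by
  induction hab with
  | refl => exact .refl
  | tail _ hcb ih => exact Relation.ReflTransGen.head hcb.symm ih

theorem EdgeConn.mono (hFF' : F ⊆ F') (hab : EdgeConn F a b) : EdgeConn F' a b :=
  Relation.ReflTransGen.mono (fun _ _ => Or.imp (@hFF' _) (@hFF' _)) _ _ hab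

theorem edgeConn_of_mem {e : U × U} (he : e ∈ F) : EdgeConn F e.1 e.2 :=
  .single (.inl he)

theorem EdgeConn.exists_mem_ne (hab : EdgeConn F a b) {φ : U → β} (hφ : φ a ≠ φ b) :
    ∃ e ∈ F, φ e.1 ≠ φ e.2 := by
  induction hab with
  | refl => exact absurd rfl hφ
  | @tail c b _ hcb ih =>
    by_cases hac : φ a = φ c
    · rcases hcb with hcb | hbc
      · exact ⟨_, hcb, hac ▸ hφ⟩
      · exact ⟨_, hbc, (hac ▸ hφ).symm⟩
    · exact ih hac

theorem card_image_update_id_add_one [DecidableEq β] {S : Finset β} {b c : β} (hb : b ∈ S)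
    (hc : c ∈ S) (hbc : b ≠ c) : #(S.image (Function.update id c b)) + 1 = #S := by
  have : S.image (Function.update id c b) = S.erase c := by
    ext y
    simp only [mem_image, mem_erase, Function.update_apply, id]
    constructor
    · rintro ⟨z, hz, rfl⟩
      split_ifs with hzc
      · exact ⟨hbc, hb⟩
      · exact ⟨hzc, hz⟩
    · rintro ⟨hyc, hy⟩
      exact ⟨y, hy, if_neg hyc⟩
  rw [this, card_erase_add_one hc]

variable [Fintype U] [DecidableEq U] [DecidableEq β]

/-- Induction on the number of crossing edges: merging the classes of the two ends of one
crossing edge loses one class and at least that edge. -/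
theorem card_image_le_card_filter_add_one (hF : ∀ a b, EdgeConn F a b) (φ : U → β) :
    #(univ.image φ) ≤ #(F.filter fun e => φ e.1 ≠ φ e.2) + 1 := by
  induction hk : #(F.filter fun e => φ e.1 ≠ φ e.2) using Nat.strong_induction_on
    generalizing φ with
  | _ k ih =>
  by_cases hφ : ∀ a b, φ a = φ b
  · exact (card_le_one.2 (by simpa using hφ)).trans (by omega)
  push Not at hφ
  obtain ⟨a, b, hab⟩ := hφ
  obtain ⟨e, he, hne⟩ := (hF a b).exists_mem_ne hab
  set ψ := Function.update id (φ e.2) (φ e.1) ∘ φ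
  have hcard : #(univ.image ψ) + 1 = #(univ.image φ) := by
    rw [← image_image]
    exact card_image_update_id_add_one (mem_image_of_mem φ (mem_univ e.1))
      (mem_image_of_mem φ (mem_univ e.2)) hne
  have hsub :
      (F.filter fun d => ψ d.1 ≠ ψ d.2) ⊆ (F.filter fun d => φ d.1 ≠ φ d.2).erase e := by
    intro d hd
    simp only [mem_filter, mem_erase] at hd ⊢
    refine ⟨?_, hd.1, fun h => hd.2 (by simp only [ψ, Function.comp_apply, h])⟩
    rintro rfl
    simp [ψ, hne] at hd
  have hlt : #(F.filter fun d => ψ d.1 ≠ ψ d.2) < k :=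
    hk ▸ (card_le_card hsub).trans_lt (card_erase_lt_of_mem (mem_filter.2 ⟨he, hne⟩))
  have := ih _ hlt ψ rfl
  omega

theorem card_univ_le_card_add_one (hF : ∀ a b, EdgeConn F a b) : Fintype.card U ≤ #F + 1 := by
  have := card_image_le_card_filter_add_one hF id
  rw [image_id, card_univ] at this
  exact this.trans (by gcongr; exact filter_subset _ _)

theorem exists_subset_edgeConn_union {X : Finset U} (hX : X.Nonempty)
    (hEX : ∀ e ∈ E, e.1 ∈ X ∧ e.2 ∈ X) (hE : ∀ a ∈ X, ∀ b ∈ X, EdgeConn E a b)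
    (φ : U → β)
    (hF : ∀ a ∈ X, ∀ b ∈ X, φ a = φ b → EdgeConn F a b) :
    ∃ C ⊆ E, #C + 1 ≤ #(X.image φ) ∧ ∀ a ∈ X, ∀ b ∈ X, EdgeConn (F ∪ C) a b := by
  induction hk : #(X.image φ) generalizing φ F with
  | zero => simp [hX.ne_empty] at hk
  | succ k ih =>
  by_cases hφ : ∀ a ∈ X, ∀ b ∈ X, φ a = φ b
  · refine ⟨∅, empty_subset _, by simp, fun a ha b hb => ?_⟩
    simpa using hF a ha b hb (hφ a ha b hb)
  push Not at hφ
  obtain ⟨a, ha, b, hb, hab⟩ := hφ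
  obtain ⟨e, he, hne⟩ := (hE a ha b hb).exists_mem_ne hab
  obtain ⟨he₁, he₂⟩ := hEX e he
  set ψ := Function.update id (φ e.2) (φ e.1) ∘ φ
  -- through `e`, the class of `e.2` is joined to that of `e.1`
  have hrep : ∀ x ∈ X, ∃ y ∈ X, φ y = ψ x ∧ EdgeConn (insert e F) x y := by
    intro x hx
    by_cases hxe : φ x = φ e.2
    · refine ⟨e.1, he₁, by simp [ψ, hxe], ?_⟩
      exact ((hF x hx _ he₂ hxe).mono (subset_insert _ _)).trans
        (edgeConn_of_mem (mem_insert_self e F)).symm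
    · exact ⟨x, hx, by simp [ψ, hxe], .refl⟩
  have hψ : ∀ x ∈ X, ∀ y ∈ X, ψ x = ψ y → EdgeConn (insert e F) x y := by
    intro x hx y hy hxy
    obtain ⟨x', hx', hφx, hxx'⟩ := hrep x hx
    obtain ⟨y', hy', hφy, hyy'⟩ := hrep y hy
    exact hxx'.trans (((hF x' hx' y' hy' (by rw [hφx, hφy, hxy])).mono
      (subset_insert _ _)).trans hyy'.symm)
  have hcard : #(X.image ψ) + 1 = #(X.image φ) := by
    rw [← image_image]
    exact card_image_update_id_add_one (mem_image_of_mem φ he₁) (mem_image_of_mem φ he₂) hne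
  obtain ⟨C, hCE, hCcard, hC⟩ := ih ψ hψ (by omega)
  refine ⟨insert e C, insert_subset he hCE, by grind [card_insert_le], fun x hx y hy => ?_⟩
  exact (hC x hx y hy).mono (by rw [insert_union, union_insert])

end Graph

section Levels
variable {U : Type*} {Es : Finset (U × U)} {wh : U × U → ℝ} {x : ℝ} {a b : U}

theorem ConnBelow.symm (hab : ConnBelow Es wh x a b) : ConnBelow Es wh x b a := by
  induction hab with
  | refl => exact .refl
  | tail _ hcb ih => exact Relation.ReflTransGen.head hcb.symm ih

variable [Fintype U]

@[simp]
theorem mem_compAt : b ∈ compAt Es wh x a ↔ ConnBelow Es wh x a b := by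
  simp [compAt]

theorem compAt_eq_of_connBelow (hab : ConnBelow Es wh x a b) :
    compAt Es wh x a = compAt Es wh x b := by
  ext c
  simp only [mem_compAt]
  exact ⟨hab.symm.trans, hab.trans⟩

theorem lt_of_compAt_ne {e : U × U} (he : e ∈ Es)
    (hne : compAt Es wh x e.1 ≠ compAt Es wh x e.2) : x < wh e :=
  lt_of_not_ge fun hle => hne (compAt_eq_of_connBelow (.single (.inl ⟨he, hle⟩)))

theorem edgeConn_filter_of_mem_compAt [DecidableEq U] (hb : b ∈ compAt Es wh x a) :
    EdgeConn
      (Es.filter fun e => wh e ≤ x ∧ e.1 ∈ compAt Es wh x a ∧ e.2 ∈ compAt Es wh x a)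
      a b := by
  induction mem_compAt.1 hb with
  | refl => exact .refl
  | @tail c b hac hcb ih =>
    have hc : c ∈ compAt Es wh x a := mem_compAt.2 hac
    have hb : b ∈ compAt Es wh x a := mem_compAt.2 (hac.tail hcb)
    refine (ih hc).tail ?_
    rcases hcb with ⟨hcb, hw⟩ | ⟨hbc, hw⟩
    · exact .inl (mem_filter.2 ⟨hcb, hw, hc, hb⟩)
    · exact .inr (mem_filter.2 ⟨hbc, hw, hb, hc⟩)

end Levels

section Tree
variable {N : Type*} {par : N → N} {root : N} {h : N → ℝ} {a b c m n p : N}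

theorem isDesc_refl (par : N → N) (n : N) : IsDesc par n n := ⟨0, rfl⟩

theorem isDesc_par (par : N → N) (m : N) : IsDesc par m (par m) := ⟨1, rfl⟩

theorem IsDesc.trans (hab : IsDesc par a b) (hbc : IsDesc par b c) : IsDesc par a c := by
  obtain ⟨k, rfl⟩ := hab
  obtain ⟨l, rfl⟩ := hbc
  exact ⟨l + k, Function.iterate_add_apply par l k a⟩

theorem isDesc_iff_eq_or_isDesc_par : IsDesc par a m ↔ m = a ∨ IsDesc par (par a) m := by
  refine ⟨fun ⟨k, hk⟩ => ?_, fun h => h.elim (fun hm => hm ▸ isDesc_refl par a)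
    (isDesc_par par a).trans⟩
  cases k with
  | zero => exact .inl hk.symm
  | succ k => exact .inr ⟨k, hk⟩

theorem IsDesc.par_of_ne (hmn : IsDesc par m n) (hne : m ≠ n) : IsDesc par (par m) n :=
  (isDesc_iff_eq_or_isDesc_par.1 hmn).resolve_left (Ne.symm hne)

theorem IsDesc.total (ha : IsDesc par p a) (hb : IsDesc par p b) :
    IsDesc par a b ∨ IsDesc par b a := by
  obtain ⟨i, rfl⟩ := ha
  obtain ⟨j, rfl⟩ := hb
  rcases le_total i j with hij | hij
  · exact .inl ⟨j - i, by rw [← Function.iterate_add_apply, Nat.sub_add_cancel hij]⟩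
  · exact .inr ⟨i - j, by rw [← Function.iterate_add_apply, Nat.sub_add_cancel hij]⟩

theorem isDesc_root_iff (hroot : par root = root) : IsDesc par root m ↔ m = root := by
  refine ⟨fun ⟨k, hk⟩ => hk ▸ ?_, fun hm => hm ▸ isDesc_refl par root⟩
  exact Function.iterate_fixed hroot k

variable [Fintype N] [DecidableEq N]

def children (par : N → N) (n : N) : Finset N := univ.filter fun c => par c = n ∧ c ≠ n

@[simp]
theorem mem_children : c ∈ children par n ↔ par c = n ∧ c ≠ n := by
  simp [children]

theorem ne_root_of_mem_children {root : N} (hroot : par root = root) (hc : c ∈ children par n) :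
    c ≠ root := by
  obtain ⟨hcn, hne⟩ := mem_children.1 hc
  intro hcr
  rw [← hcn, hcr, hroot] at hne
  exact hne rfl

theorem IsDesc.exists_child (hmn : IsDesc par m n) (hne : m ≠ n) :
    ∃ c ∈ children par n, IsDesc par m c := by
  obtain ⟨k, hk⟩ := hmn
  induction k generalizing m with
  | zero => exact absurd hk hne
  | succ k ih =>
    by_cases hpm : par m = n
    · exact ⟨m, mem_children.2 ⟨hpm, hne⟩, isDesc_refl par m⟩
    · obtain ⟨c, hc, hmc⟩ := ih hpm hk
      exact ⟨c, hc, (isDesc_par par m).trans hmc⟩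

theorem IsDesc.eq_of_children_eq_empty (hmn : IsDesc par m n) (hn : children par n = ∅) :
    m = n := by
  by_contra hne
  obtain ⟨c, hc, -⟩ := hmn.exists_child hne
  simp [hn] at hc

end Tree

section Heights
variable {N : Type*} {par : N → N} {root : N} {h : N → ℝ} {a c m n : N}
variable (hroot : par root = root) (hmono : ∀ m, m ≠ root → h m < h (par m))
include hroot hmono

theorem height_le_par (m : N) : h m ≤ h (par m) := by
  rcases eq_or_ne m root with rfl | hm
  · rw [hroot]
  · exact (hmono m hm).le

theorem IsDesc.height_le (hmn : IsDesc par m n) : h m ≤ h n := by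
  obtain ⟨k, rfl⟩ := hmn
  induction k with
  | zero => exact le_rfl
  | succ k ih =>
    rw [Function.iterate_succ_apply']
    exact ih.trans (height_le_par hroot hmono _)

theorem IsDesc.height_par_le (hmn : IsDesc par m n) (hne : m ≠ n) : h (par m) ≤ h n :=
  (hmn.par_of_ne hne).height_le hroot hmono

/-- The hypotheses say that the height intervals `[h m, h (par m))` of the two nodes overlap. -/
theorem eq_of_isDesc_of_isDesc {p m₁ m₂ : N} (h₁ : IsDesc par p m₁)
    (h₂ : IsDesc par p m₂) (h₁₂ : h m₁ < h (par m₂)) (h₂₁ : h m₂ < h (par m₁)) :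
    m₁ = m₂ := by
  by_contra hne
  rcases h₁.total h₂ with h12 | h21
  · exact (h12.height_par_le hroot hmono hne).not_gt h₂₁
  · exact (h21.height_par_le hroot hmono (Ne.symm hne)).not_gt h₁₂

open Classical in
theorem sum_filter_isDesc [Fintype N] (ha : IsDesc par a root) :
    ∑ m ∈ univ.filter (IsDesc par a ·), (h (par m) - h m) = h root - h a := by
  classical
  have hroot' : univ.filter (IsDesc par root ·) = {root} := by
    ext m
    simp [isDesc_root_iff hroot]
  obtain ⟨k, hk⟩ := ha
  induction k generalizing a with
  | zero =>
    rw [show a = root from hk, hroot', sum_singleton, hroot]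
  | succ k ih =>
    rcases eq_or_ne a root with rfl | ha
    · rw [hroot', sum_singleton, hroot]
    have hdesc :
        univ.filter (IsDesc par a ·) = insert a (univ.filter (IsDesc par (par a) ·)) := by
      ext m
      simp [isDesc_iff_eq_or_isDesc_par (a := a)]
    have ha' : a ∉ univ.filter (IsDesc par (par a) ·) := by
      simpa using fun hpa => (hpa.height_le hroot hmono).not_gt (hmono a ha)
    rw [hdesc, sum_insert ha', ih hk]
    ring

variable [Fintype N] [DecidableEq N]

theorem height_lt_of_mem_children (hc : c ∈ children par n) : h c < h n :=
  (mem_children.1 hc).1 ▸ hmono c (ne_root_of_mem_children hroot hc)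

theorem eq_of_mem_children_of_isDesc {c₁ c₂ p : N} (hc₁ : c₁ ∈ children par n)
    (hc₂ : c₂ ∈ children par n) (h₁ : IsDesc par p c₁) (h₂ : IsDesc par p c₂) :
    c₁ = c₂ := by
  refine eq_of_isDesc_of_isDesc hroot hmono h₁ h₂ ?_ ?_
  · rw [(mem_children.1 hc₂).1]
    exact height_lt_of_mem_children hroot hmono hc₁
  · rw [(mem_children.1 hc₁).1]
    exact height_lt_of_mem_children hroot hmono hc₂

end Heights

section SubtreeLength
variable {N : Type*} [Fintype N] {par : N → N} {root : N} {h : N → ℝ} {n : N}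

open Classical in
/-- Includes the edge from `n` up to `par n`. -/
noncomputable def subtreeLength (par : N → N) (h : N → ℝ) (n : N) : ℝ :=
  ∑ m ∈ univ.filter (IsDesc par · n), (h (par m) - h m)

theorem subtreeLength_eq_of_isDesc (hdesc : ∀ m, IsDesc par m root) :
    subtreeLength par h root = ∑ m, (h (par m) - h m) := by
  simp [subtreeLength, hdesc]

variable [DecidableEq N]

theorem subtreeLength_eq (hroot : par root = root) (hmono : ∀ m, m ≠ root → h m < h (par m))
    (n : N) :
    subtreeLength par h n = h (par n) - h n + ∑ c ∈ children par n, subtreeLength par h c := by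
  classical
  have hdesc : univ.filter (IsDesc par · n) =
      insert n ((children par n).biUnion fun c => univ.filter (IsDesc par · c)) := by
    ext m
    simp only [mem_filter, mem_univ, true_and, mem_insert, mem_biUnion]
    refine ⟨fun hmn => or_iff_not_imp_left.2 (hmn.exists_child ·), ?_⟩
    rintro (rfl | ⟨c, hc, hmc⟩)
    · exact isDesc_refl par m
    · exact hmc.trans ((mem_children.1 hc).1 ▸ isDesc_par par c)
  have hn : n ∉ (children par n).biUnion fun c => univ.filter (IsDesc par · c) := by
    simp only [mem_biUnion, mem_filter, mem_univ, true_and, not_exists, not_and]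
    exact fun c hc hnc =>
      (hnc.height_le hroot hmono).not_gt (height_lt_of_mem_children hroot hmono hc)
  have hdisj :
      (children par n : Set N).PairwiseDisjoint fun c => univ.filter (IsDesc par · c) := by
    intro c₁ hc₁ c₂ hc₂ hne
    refine disjoint_left.2 fun m hm₁ hm₂ => hne ?_
    exact eq_of_mem_children_of_isDesc hroot hmono hc₁ hc₂ (mem_filter.1 hm₁).2
      (mem_filter.1 hm₂).2
  rw [subtreeLength, hdesc, sum_insert hn, sum_biUnion hdisj]
  rfl

end SubtreeLength

section LayerCake
variable {ι : Type*}

theorem integrable_indicator_Ico (a b : ℝ) :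
    Integrable ((Set.Ico a b).indicator (1 : ℝ → ℝ)) :=
  (integrable_indicator_iff measurableSet_Ico).2 (integrableOn_const (by simp))

theorem integrable_sum_indicator_Ico (s : Finset ι) (a b : ι → ℝ) :
    Integrable fun x => ∑ i ∈ s, (Set.Ico (a i) (b i)).indicator (1 : ℝ → ℝ) x :=
  integrable_finsetSum s fun i _ => integrable_indicator_Ico (a i) (b i)

theorem integral_indicator_Ico {a b : ℝ} (hab : a ≤ b) :
    ∫ x, (Set.Ico a b).indicator (1 : ℝ → ℝ) x = b - a := by
  rw [integral_indicator_one measurableSet_Ico, Real.volume_real_Ico_of_le hab]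

theorem integral_sum_indicator_Ico (s : Finset ι) {a b : ι → ℝ}
    (hab : ∀ i ∈ s, a i ≤ b i) :
    ∫ x, ∑ i ∈ s, (Set.Ico (a i) (b i)).indicator (1 : ℝ → ℝ) x =
      ∑ i ∈ s, (b i - a i) := by
  rw [integral_finsetSum s fun i _ => integrable_indicator_Ico (a i) (b i)]
  exact sum_congr rfl fun i hi => integral_indicator_Ico (hab i hi)

theorem sum_indicator_Ico_eq_card (s : Finset ι) (a b : ι → ℝ) (x : ℝ) :
    ∑ i ∈ s, (Set.Ico (a i) (b i)).indicator (1 : ℝ → ℝ) x =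
      #(s.filter fun i => x ∈ Set.Ico (a i) (b i)) := by
  classical
  simp [Set.indicator_apply, sum_boole]

end LayerCake

section Kruskal
variable {U N : Type*} [Fintype U]

@[simp]
theorem mem_leavesBelow {par : N → N} {lf : U → N} {n : N} {v : U} :
    v ∈ leavesBelow par lf n ↔ IsDesc par (lf v) n := by
  simp [leavesBelow]

/-- The auxiliary tree of Kruskal's algorithm on `(Es, wh)`: `par` is its parent map, `lf`
places the graph vertices at its leaves and `h` is the height of a node. -/
structure IsKruskalTree (Es : Finset (U × U)) (wh : U × U → ℝ) (par : N → N) (root : N)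
    (h : N → ℝ) (lf : U → N) : Prop where
  par_root : par root = root
  isDesc_root : ∀ n, IsDesc par n root
  lf_injective : Function.Injective lf
  eq_lf_of_par_eq_lf : ∀ v m, par m = lf v → m = lf v
  exists_lf_of_childless : ∀ n, (∀ m, par m = n → m = n) → ∃ v, lf v = n
  height_lf : ∀ v, h (lf v) = 0
  height_lt_par : ∀ m, m ≠ root → h m < h (par m)
  leavesBelow_eq_compAt : ∀ n, ∀ a ∈ leavesBelow par lf n,
    leavesBelow par lf n = compAt Es wh (h n) a
  leavesBelow_eq_compAt_of_le_of_lt : ∀ m, m ≠ root → ∀ x, h m ≤ x → x < h (par m) →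
    ∀ a ∈ leavesBelow par lf m, leavesBelow par lf m = compAt Es wh x a
  leavesBelow_root : leavesBelow par lf root = univ

structure IsLightConnector (Es : Finset (U × U)) (wh : U × U → ℝ) (X : Finset U) (w : ℝ)
    (F : Finset (U × U)) : Prop where
  subset : F ⊆ Es
  edgeConn : ∀ a ∈ X, ∀ b ∈ X, EdgeConn F a b
  card_add_one_le : #F + 1 ≤ #X
  sum_le : ∑ e ∈ F, wh e ≤ w

namespace IsKruskalTree

variable [Fintype N] [DecidableEq N] {Es : Finset (U × U)} {wh : U × U → ℝ} {par : N → N}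
  {root : N} {h : N → ℝ} {lf : U → N} {n : N}

theorem exists_lf_isDesc (K : IsKruskalTree Es wh par root h lf) (n : N) :
    ∃ v, IsDesc par (lf v) n := by
  classical
  obtain ⟨m, hm, hmin⟩ := exists_min_image (univ.filter (IsDesc par · n)) h
    ⟨n, by simpa using isDesc_refl par n⟩
  simp only [mem_filter, mem_univ, true_and] at hm hmin
  -- a lowest node of the subtree has no children, so it is a leaf
  obtain ⟨v, rfl⟩ := K.exists_lf_of_childless m fun c hc => by_contra fun hne =>
    (hmin c ((hc ▸ isDesc_par par c).trans hm)).not_gt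
      (height_lt_of_mem_children K.par_root K.height_lt_par (mem_children.2 ⟨hc, hne⟩))
  exact ⟨v, hm⟩

theorem leavesBelow_nonempty (K : IsKruskalTree Es wh par root h lf) (n : N) :
    (leavesBelow par lf n).Nonempty :=
  let ⟨v, hv⟩ := K.exists_lf_isDesc n
  ⟨v, mem_leavesBelow.2 hv⟩

theorem height_nonneg (K : IsKruskalTree Es wh par root h lf) (n : N) : 0 ≤ h n := by
  obtain ⟨v, hv⟩ := K.exists_lf_isDesc n
  exact K.height_lf v ▸ hv.height_le K.par_root K.height_lt_par

theorem pairwiseDisjoint_leavesBelow (K : IsKruskalTree Es wh par root h lf) (n : N) :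
    (children par n : Set N).PairwiseDisjoint (leavesBelow par lf) := by
  intro c₁ hc₁ c₂ hc₂ hne
  refine disjoint_left.2 fun v hv₁ hv₂ => hne ?_
  exact eq_of_mem_children_of_isDesc K.par_root K.height_lt_par hc₁ hc₂
    (mem_leavesBelow.1 hv₁) (mem_leavesBelow.1 hv₂)

theorem isLightConnector_empty (K : IsKruskalTree Es wh par root h lf)
    (hn : children par n = ∅) :
    IsLightConnector Es wh (leavesBelow par lf n) (subtreeLength par h n - h (par n)) ∅ where
  subset := empty_subset _
  edgeConn a ha b hb := by
    rw [K.lf_injective (((mem_leavesBelow.1 ha).eq_of_children_eq_empty hn).trans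
      ((mem_leavesBelow.1 hb).eq_of_children_eq_empty hn).symm)]
    exact .refl
  card_add_one_le := by simpa using (K.leavesBelow_nonempty n).card_pos
  sum_le := by
    obtain ⟨v, hv⟩ := K.leavesBelow_nonempty n
    rw [subtreeLength_eq K.par_root K.height_lt_par, hn, sum_empty,
      ← (mem_leavesBelow.1 hv).eq_of_children_eq_empty hn, K.height_lf]
    simp

variable [DecidableEq U]

theorem leavesBelow_eq_biUnion (K : IsKruskalTree Es wh par root h lf)
    (hn : (children par n).Nonempty) :
    leavesBelow par lf n = (children par n).biUnion (leavesBelow par lf) := by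
  ext v
  simp only [mem_leavesBelow, mem_biUnion]
  refine ⟨fun hv => hv.exists_child fun hvn => ?_, fun ⟨c, hc, hvc⟩ =>
    hvc.trans ((mem_children.1 hc).1 ▸ isDesc_par par c)⟩
  obtain ⟨c, hc⟩ := hn
  obtain ⟨hcn, hne⟩ := mem_children.1 hc
  exact hne (hvn ▸ K.eq_lf_of_par_eq_lf v c (hvn ▸ hcn))

theorem card_filter_le_card_image_compAt (K : IsKruskalTree Es wh par root h lf) (x : ℝ) :
    #(univ.filter fun m => x ∈ Set.Ico (h m) (h (par m))) ≤ #(univ.image (compAt Es wh x)) := by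
  have hne_root : ∀ m, x ∈ Set.Ico (h m) (h (par m)) → m ≠ root := by
    rintro m ⟨h₁, h₂⟩ rfl
    rw [K.par_root] at h₂
    exact h₂.not_ge h₁
  refine card_le_card_of_injOn (leavesBelow par lf) (fun m hm => ?_)
    fun m₁ hm₁ m₂ hm₂ heq => ?_
  · obtain ⟨hm₁, hm₂⟩ := (mem_filter.1 hm).2
    obtain ⟨a, ha⟩ := K.leavesBelow_nonempty m
    exact mem_image.2 ⟨a, mem_univ a, (K.leavesBelow_eq_compAt_of_le_of_lt m
      (hne_root m ⟨hm₁, hm₂⟩) x hm₁ hm₂ a ha).symm⟩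
  · obtain ⟨-, hx₁, hx₁'⟩ := mem_filter.1 hm₁
    obtain ⟨-, hx₂, hx₂'⟩ := mem_filter.1 hm₂
    obtain ⟨v, hv⟩ := K.leavesBelow_nonempty m₁
    have hv₂ : v ∈ leavesBelow par lf m₂ := heq ▸ hv
    exact eq_of_isDesc_of_isDesc K.par_root K.height_lt_par (mem_leavesBelow.1 hv)
      (mem_leavesBelow.1 hv₂) (by linarith) (by linarith)

theorem card_filter_le_card_filter_add_one (K : IsKruskalTree Es wh par root h lf)
    {F : Finset (U × U)} (hFE : F ⊆ Es) (hF : ∀ a b, EdgeConn F a b) (x : ℝ) :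
    #(univ.filter fun m => x ∈ Set.Ico (h m) (h (par m))) ≤ #(F.filter fun e => x < wh e) + 1 :=
  calc _ ≤ #(univ.image (compAt Es wh x)) := K.card_filter_le_card_image_compAt x
    _ ≤ #(F.filter fun e => compAt Es wh x e.1 ≠ compAt Es wh x e.2) + 1 :=
      card_image_le_card_filter_add_one hF _
    _ ≤ #(F.filter fun e => x < wh e) + 1 := by
      gcongr 1
      refine card_le_card fun e he => ?_
      simp only [mem_filter] at he ⊢
      exact ⟨he.1, lt_of_compAt_ne (hFE he.1) he.2⟩

theorem sum_indicator_le (K : IsKruskalTree Es wh par root h lf) {F : Finset (U × U)}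
    (hFE : F ⊆ Es) (hF : ∀ a b, EdgeConn F a b) (x : ℝ) :
    ∑ m, (Set.Ico (h m) (h (par m))).indicator (1 : ℝ → ℝ) x ≤
      ∑ e ∈ F, (Set.Ico 0 (wh e)).indicator (1 : ℝ → ℝ) x +
        (Set.Ico 0 (h root)).indicator (1 : ℝ → ℝ) x := by
  simp only [sum_indicator_Ico_eq_card]
  rcases (univ.filter fun m => x ∈ Set.Ico (h m) (h (par m))).eq_empty_or_nonempty with
    hempty | ⟨m, hm⟩
  · rw [hempty, card_empty, Nat.cast_zero]
    exact add_nonneg (Nat.cast_nonneg _) (Set.indicator_nonneg (fun _ _ => zero_le_one) _)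
  obtain ⟨hm₁, hm₂⟩ := (mem_filter.1 hm).2
  have hx : x ∈ Set.Ico 0 (h root) := ⟨(K.height_nonneg m).trans hm₁,
    hm₂.trans_le ((K.isDesc_root _).height_le K.par_root K.height_lt_par)⟩
  have hF' : (F.filter fun e => x ∈ Set.Ico 0 (wh e)) = F.filter fun e => x < wh e :=
    filter_congr fun e _ => by simp [hx.1]
  rw [Set.indicator_of_mem hx, hF', Pi.one_apply]
  exact_mod_cast K.card_filter_le_card_filter_add_one hFE hF x

theorem sum_sub_le_sum_add (K : IsKruskalTree Es wh par root h lf) (hwnn : ∀ e, 0 ≤ wh e)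
    {F : Finset (U × U)} (hFE : F ⊆ Es) (hF : ∀ a b, EdgeConn F a b) :
    ∑ m, (h (par m) - h m) ≤ ∑ e ∈ F, wh e + h root :=
  calc ∑ m, (h (par m) - h m)
      = ∫ x, ∑ m, (Set.Ico (h m) (h (par m))).indicator (1 : ℝ → ℝ) x :=
        (integral_sum_indicator_Ico _ fun m _ => height_le_par K.par_root K.height_lt_par m).symm
    _ ≤ ∫ x, (∑ e ∈ F, (Set.Ico 0 (wh e)).indicator (1 : ℝ → ℝ) x +
          (Set.Ico 0 (h root)).indicator (1 : ℝ → ℝ) x) :=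
        integral_mono (integrable_sum_indicator_Ico _ _ _)
          ((integrable_sum_indicator_Ico _ _ _).add (integrable_indicator_Ico _ _))
          (K.sum_indicator_le hFE hF)
    _ = ∑ e ∈ F, wh e + h root := by
        rw [integral_add (integrable_sum_indicator_Ico _ _ _) (integrable_indicator_Ico _ _),
          integral_sum_indicator_Ico _ fun e _ => hwnn e,
          integral_indicator_Ico (K.height_nonneg root)]
        simp only [sub_zero]

/-- Just below `h n` the leaves of each child of `n` form a component, and at `h n` these merge
into one. -/
theorem exists_edges_joining_children (K : IsKruskalTree Es wh par root h lf)
    (hn : (children par n).Nonempty) {F : N → Finset (U × U)}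
    (hF : ∀ c ∈ children par n, ∀ a ∈ leavesBelow par lf c, ∀ b ∈ leavesBelow par lf c,
      EdgeConn (F c) a b) :
    ∃ C ⊆ Es, (∀ e ∈ C, wh e ≤ h n) ∧ #C + 1 ≤ #(children par n) ∧
      ∀ a ∈ leavesBelow par lf n, ∀ b ∈ leavesBelow par lf n,
        EdgeConn ((children par n).biUnion F ∪ C) a b := by
  have hX := K.leavesBelow_eq_biUnion hn
  set J := children par n
  set X := leavesBelow par lf n
  obtain ⟨x, hxJ, hxn⟩ : ∃ x, (∀ c ∈ J, h c ≤ x) ∧ x < h n :=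
    ⟨J.sup' hn h, fun c hc => le_sup' h hc,
      (sup'_lt_iff hn).2 fun c hc => height_lt_of_mem_children K.par_root K.height_lt_par hc⟩
  have hblock : ∀ c ∈ J, ∀ a ∈ leavesBelow par lf c,
      compAt Es wh x a = leavesBelow par lf c := fun c hc a ha =>
    (K.leavesBelow_eq_compAt_of_le_of_lt c (ne_root_of_mem_children K.par_root hc) x
      (hxJ c hc) ((mem_children.1 hc).1 ▸ hxn) a ha).symm
  have hmemX : ∀ a ∈ X, ∃ c ∈ J, a ∈ leavesBelow par lf c :=
    fun a ha => mem_biUnion.1 (hX ▸ ha)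
  have hE : ∀ a ∈ X, ∀ b ∈ X,
      EdgeConn (Es.filter fun e => wh e ≤ h n ∧ e.1 ∈ X ∧ e.2 ∈ X) a b := by
    intro a ha b hb
    have hXa : X = compAt Es wh (h n) a := K.leavesBelow_eq_compAt n a ha
    have := edgeConn_filter_of_mem_compAt (hXa ▸ hb)
    rwa [← hXa] at this
  have hFX : ∀ a ∈ X, ∀ b ∈ X, compAt Es wh x a = compAt Es wh x b →
      EdgeConn (J.biUnion F) a b := by
    intro a ha b hb hab
    obtain ⟨c, hc, hac⟩ := hmemX a ha
    obtain ⟨c', hc', hbc'⟩ := hmemX b hb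
    have hbc : b ∈ leavesBelow par lf c := by
      rwa [← hblock c hc a hac, hab, hblock c' hc' b hbc']
    exact (hF c hc a hac b hbc).mono (subset_biUnion_of_mem F hc)
  have himage : #(X.image (compAt Es wh x)) ≤ #J := by
    refine (card_le_card fun s hs => ?_).trans (card_image_le (s := J) (f := leavesBelow par lf))
    obtain ⟨a, ha, rfl⟩ := mem_image.1 hs
    obtain ⟨c, hc, hac⟩ := hmemX a ha
    exact mem_image.2 ⟨c, hc, (hblock c hc a hac).symm⟩
  obtain ⟨C, hCE, hCcard, hC⟩ := exists_subset_edgeConn_union (K.leavesBelow_nonempty n)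
    (fun e he => (mem_filter.1 he).2.2) hE (compAt Es wh x) hFX
  exact ⟨C, hCE.trans (filter_subset _ _), fun e he => (mem_filter.1 (hCE he)).2.1,
    hCcard.trans himage, hC⟩

theorem exists_isLightConnector_of_children (K : IsKruskalTree Es wh par root h lf)
    (hwnn : ∀ e, 0 ≤ wh e) (hn : (children par n).Nonempty)
    (ih : ∀ c ∈ children par n, ∃ F,
      IsLightConnector Es wh (leavesBelow par lf c) (subtreeLength par h c - h n) F) :
    ∃ F, IsLightConnector Es wh (leavesBelow par lf n) (subtreeLength par h n - h (par n)) F := by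
  choose! F hF using ih
  obtain ⟨C, hCE, hCw, hCcard, hC⟩ :=
    K.exists_edges_joining_children hn fun c hc => (hF c hc).edgeConn
  have hlength := subtreeLength_eq K.par_root K.height_lt_par (h := h) n
  have hX := K.leavesBelow_eq_biUnion hn
  have hdisj := K.pairwiseDisjoint_leavesBelow n
  set J := children par n
  refine ⟨J.biUnion F ∪ C, ⟨union_subset (biUnion_subset.2 fun c hc => (hF c hc).subset) hCE,
    hC, ?_, ?_⟩⟩
  · calc #(J.biUnion F ∪ C) + 1 ≤ ∑ c ∈ J, (#(F c) + 1) := by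
          grw [card_union_le, card_biUnion_le, sum_add_distrib, sum_const, smul_eq_mul, mul_one]
          omega
      _ ≤ ∑ c ∈ J, #(leavesBelow par lf c) := sum_le_sum fun c hc => (hF c hc).card_add_one_le
      _ = #(leavesBelow par lf n) := by rw [hX, card_biUnion hdisj]
  · have hCJ : (#C : ℝ) ≤ #J - 1 := by
      rw [le_sub_iff_add_le]
      exact_mod_cast hCcard
    calc ∑ e ∈ J.biUnion F ∪ C, wh e
        ≤ ∑ c ∈ J, ∑ e ∈ F c, wh e + ∑ e ∈ C, wh e :=
          (sum_union_le_of_nonneg hwnn _ _).trans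
            (by gcongr; exact sum_biUnion_le_of_nonneg hwnn _ _)
      _ ≤ ∑ c ∈ J, (subtreeLength par h c - h n) + (#J - 1) * h n := by
          gcongr ?_ + ?_
          · exact sum_le_sum fun c hc => (hF c hc).sum_le
          · calc ∑ e ∈ C, wh e ≤ #C * h n := by simpa using sum_le_card_nsmul C wh (h n) hCw
              _ ≤ (#J - 1) * h n := mul_le_mul_of_nonneg_right hCJ (K.height_nonneg n)
      _ = subtreeLength par h n - h (par n) := by
          rw [hlength, sum_sub_distrib, sum_const, nsmul_eq_mul]
          ring

theorem exists_isLightConnector (K : IsKruskalTree Es wh par root h lf) (hwnn : ∀ e, 0 ≤ wh e)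
    (n : N) :
    ∃ F, IsLightConnector Es wh (leavesBelow par lf n) (subtreeLength par h n - h (par n)) F := by
  have : IsTrans N (fun a b => h a < h b) := ⟨fun _ _ _ => lt_trans⟩
  have : Std.Irrefl (fun a b : N => h a < h b) := ⟨fun _ => lt_irrefl _⟩
  induction n using (Finite.wellFounded_of_trans_of_irrefl fun a b : N => h a < h b).induction
    with | _ n ih =>
  rcases (children par n).eq_empty_or_nonempty with hn | hn
  · exact ⟨∅, K.isLightConnector_empty hn⟩
  · refine K.exists_isLightConnector_of_children hwnn hn fun c hc => ?_
    rw [← (mem_children.1 hc).1]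
    exact ih c (height_lt_of_mem_children K.par_root K.height_lt_par hc)

theorem opt_eq (K : IsKruskalTree Es wh par root h lf) (hwnn : ∀ e, 0 ≤ wh e) :
    OPT Es univ wh = ∑ m, (h (par m) - h m) - h root := by
  obtain ⟨F, hF⟩ := K.exists_isLightConnector hwnn root
  rw [K.leavesBelow_root, K.par_root, subtreeLength_eq_of_isDesc K.isDesc_root] at hF
  have hspan : IsSpanningTree Es univ F := ⟨hF.subset, by simp, hF.edgeConn,
    le_antisymm hF.card_add_one_le (card_univ_le_card_add_one fun a b =>
      hF.edgeConn a (mem_univ a) b (mem_univ b))⟩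
  have hlower : ∀ t ∈ {t | ∃ F, IsSpanningTree Es univ F ∧ t = ∑ e ∈ F, wh e},
      ∑ m, (h (par m) - h m) - h root ≤ t := by
    rintro t ⟨F', ⟨hF'E, -, hF'conn, -⟩, rfl⟩
    linarith [K.sum_sub_le_sum_add hwnn hF'E fun a b => hF'conn a (mem_univ a) b (mem_univ b)]
  exact le_antisymm ((csInf_le ⟨_, hlower⟩ ⟨F, hspan, rfl⟩).trans hF.sum_le)
    (le_csInf ⟨_, F, hspan, rfl⟩ hlower)

end IsKruskalTree

end Kruskal

open Classical in
theorem stmt_19_general {U N : Type*} [Fintype U] [DecidableEq U] [Fintype N] [DecidableEq N]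
    (Es : Finset (U × U)) (wh : U × U → ℝ) (hwnn : ∀ e, 0 ≤ wh e) (r : U)
    (par : N → N) (root : N) (h : N → ℝ) (lf : U → N)
    -- `par` is the parent function of a finite rooted tree with root `root`:
    (hroot : par root = root)
    (hwf : ∀ n, IsDesc par n root)
    -- the leaves of the tree are exactly the vertices of `G`:
    (hinj : Function.Injective lf)
    (hleaf1 : ∀ v : U, ∀ m, par m = lf v → m = lf v)
    (hleaf2 : ∀ n : N, (∀ m, par m = n → m = n) → ∃ v, lf v = n)
    -- leaves have height `0` and heights strictly increase towards the root:
    (hh0 : ∀ v, h (lf v) = 0)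
    (hmono : ∀ m, m ≠ root → h m < h (par m))
    -- each node `n` corresponds to the connected component, at threshold `h n`,
    -- of the vertices below it, and this component is unchanged at any
    -- threshold below the parent's height (Kruskal merging structure):
    (hcomp : ∀ n : N, ∀ a ∈ leavesBelow par lf n,
      leavesBelow par lf n = compAt Es wh (h n) a)
    (hmax : ∀ m, m ≠ root → ∀ x, h m ≤ x → x < h (par m) →
      ∀ a ∈ leavesBelow par lf m, leavesBelow par lf m = compAt Es wh x a)
    -- the root corresponds to the whole (connected) graph:
    (hrootall : leavesBelow par lf root = Finset.univ) :
    ∑ m ∈ Finset.univ.filter (fun m : N => m ≠ root ∧ r ∉ leavesBelow par lf m),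
        (h (par m) - h m)
      = OPT Es Finset.univ wh := by
  have K : IsKruskalTree Es wh par root h lf :=
    ⟨hroot, hwf, hinj, hleaf1, hleaf2, hh0, hmono, hcomp, hmax, hrootall⟩
  have hfilter : univ.filter (fun m => m ≠ root ∧ r ∉ leavesBelow par lf m) =
      univ.filter (fun m => ¬ IsDesc par (lf r) m) := by
    ext m
    simp only [mem_filter, mem_univ, true_and, mem_leavesBelow, and_iff_right_iff_imp]
    rintro hr rfl
    exact hr (hwf _)
  rw [K.opt_eq hwnn, hfilter, ← sum_filter_add_sum_filter_not univ (IsDesc par (lf r)),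
    sum_filter_isDesc hroot hmono (hwf _), hh0]
  ring

open Classical in
theorem stmt_19 {U N : Type*} [Fintype U] [DecidableEq U] [Fintype N] [DecidableEq N]
    (Es : Finset (U × U)) (wh : U × U → ℝ) (hwnn : ∀ e, 0 ≤ wh e) (r : U)
    (par : N → N) (root : N) (h : N → ℝ) (lf : U → N)
    -- `par` is the parent function of a finite rooted tree with root `root`:
    (hroot : par root = root)
    (hfix : ∀ n, par n = n → n = root)
    (hwf : ∀ n, IsDesc par n root)
    -- the leaves of the tree are exactly the vertices of `G`:
    (hinj : Function.Injective lf)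
    (hleaf1 : ∀ v : U, ∀ m, par m = lf v → m = lf v)
    (hleaf2 : ∀ n : N, (∀ m, par m = n → m = n) → ∃ v, lf v = n)
    -- leaves have height `0` and heights strictly increase towards the root:
    (hh0 : ∀ v, h (lf v) = 0)
    (hmono : ∀ m, m ≠ root → h m < h (par m))
    -- each node `n` corresponds to the connected component, at threshold `h n`,
    -- of the vertices below it, and this component is unchanged at any
    -- threshold below the parent's height (Kruskal merging structure):
    (hcomp : ∀ n : N, ∀ a ∈ leavesBelow par lf n,
      leavesBelow par lf n = compAt Es wh (h n) a)
    (hmax : ∀ m, m ≠ root → ∀ x, h m ≤ x → x < h (par m) →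
      ∀ a ∈ leavesBelow par lf m, leavesBelow par lf m = compAt Es wh x a)
    -- each internal node is created by a genuine merge at its height:
    (hnew : ∀ n : N, (∃ m, m ≠ n ∧ par m = n) → ∀ x, x < h n →
      ∃ a ∈ leavesBelow par lf n, leavesBelow par lf n ≠ compAt Es wh x a)
    -- the root corresponds to the whole (connected) graph:
    (hrootall : leavesBelow par lf root = Finset.univ) :
    ∑ m ∈ Finset.univ.filter (fun m : N => m ≠ root ∧ r ∉ leavesBelow par lf m),
        (h (par m) - h m)
      = OPT Es Finset.univ wh :=
  stmt_19_general Es wh hwnn r par root h lf hroot hwf hinj hleaf1 hleaf2 hh0 hmono hcomp hmax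
    hrootall
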